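/- arXiv:1511.00936 — 3 statements merged into one kernel-verified Lean document; each statement's English description precedes it below -/
import Mathlib

section
/- For any Rota-Baxter ideal I of Ш_k(k), the initial Rota-Baxter ideal in(I) (the Rota-Baxter ideal generated by the initial terms in(f) of all nonzero f ∈ I) has the same coefficient ideals as I: Ω_j(I) = Ω_j(in(I)) for all j ∈ ℕ. -/
open Finsupp

/-- The basis element `a_m` of the free Rota-Baxter algebra `Ш_k(k)`. -/
noncomputable def aElt {k : Type*} [CommRing k] (m : ℕ) : ℕ →₀ k := Finsupp.single m 1

/-- The product `⋄` of weight `l` on `Ш_k(k)`, defined on basis elements by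
`a_m ⋄ a_n = Σ_{i=0}^{min(m,n)} C(m+n−i,m) C(m,i) l^i a_{m+n−i}` and extended bilinearly. -/
noncomputable def diamond {k : Type*} [CommRing k] (l : k) (f g : ℕ →₀ k) : ℕ →₀ k :=
  f.sum fun m cm => g.sum fun n cn =>
    ∑ i ∈ Finset.range (min m n + 1),
      Finsupp.single (m + n - i) (cm * cn * ((m + n - i).choose m : k) * ((m.choose i : k)) * l ^ i)

/-- The Rota-Baxter operator `P (a_m) = a_{m+1}` on `Ш_k(k)`. -/
noncomputable def RBop {k : Type*} [CommRing k] (f : ℕ →₀ k) : ℕ →₀ k :=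
  Finsupp.mapDomain (· + 1) f

/-- A Rota-Baxter ideal of `Ш_k(k)` of weight `l`: a `k`-submodule that is an ideal
for `⋄` and closed under `P`. -/
def IsRBIdeal {k : Type*} [CommRing k] (l : k) (I : Submodule k (ℕ →₀ k)) : Prop :=
  (∀ f g : ℕ →₀ k, g ∈ I → diamond l f g ∈ I) ∧ (∀ f ∈ I, RBop f ∈ I)

/-- The Rota-Baxter ideal of `Ш_k(k)` generated by a set `S`. -/
noncomputable def RBspan {k : Type*} [CommRing k] (l : k) (S : Set (ℕ →₀ k)) :
    Submodule k (ℕ →₀ k) :=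
  sInf {J : Submodule k (ℕ →₀ k) | IsRBIdeal l J ∧ S ⊆ J}

/-- The coefficient ideal `Ω_j(I)`: coefficients at `a_j` of elements of `I`
supported in degrees `≤ j`. -/
def Omega {k : Type*} [CommRing k] (I : Set (ℕ →₀ k)) (j : ℕ) : Set k :=
  {b | ∃ f ∈ I, (∀ i, j < i → f i = 0) ∧ f j = b}

/-- The set of initial terms of nonzero elements of `I`. -/
def initialSet {k : Type*} [CommRing k] (I : Set (ℕ →₀ k)) : Set (ℕ →₀ k) :=
  {g | ∃ f ∈ I, ∃ n : ℕ, (∀ i, n < i → f i = 0) ∧ f n ≠ 0 ∧ g = Finsupp.single n (f n)}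

/-!
If `b a_j` is the initial term of some `f ∈ I`, then `b a_j` itself lies in `in(I)`, which gives
`Ω_j(I) ⊆ Ω_j(in(I))`. Conversely, the elements `g` with `g n ∈ Ω_n(I)` for every `n` form a
Rota-Baxter ideal: `Ω_n(I)` is an ideal of `k` that grows with `n` (apply `P`), and
`a_m ⋄ a_n` only involves `a_d` with `d ≥ n`. This ideal contains every initial term of `I`,
hence all of `in(I)`, so the top coefficient of any element of `in(I)` lies in `Ω_j(I)`.
-/

section RotaBaxter

variable {k : Type*} [CommRing k]

lemma RBop_apply_succ (f : ℕ →₀ k) (n : ℕ) : RBop f (n + 1) = f n :=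
  mapDomain_apply (add_left_injective 1) f n

lemma RBop_apply_zero (f : ℕ →₀ k) : RBop f 0 = 0 :=
  mapDomain_of_notMem_range _ _ (by simp)

lemma subset_RBspan (l : k) (S : Set (ℕ →₀ k)) : S ⊆ RBspan l S := fun _ hf =>
  Submodule.mem_sInf.mpr fun _ hJ => hJ.2 hf

lemma RBspan_le {l : k} {S : Set (ℕ →₀ k)} {J : Submodule k (ℕ →₀ k)} (hJ : IsRBIdeal l J)
    (hS : S ⊆ J) : RBspan l S ≤ J :=
  sInf_le ⟨hJ, hS⟩

lemma single_mem_initialSet {I : Set (ℕ →₀ k)} {f : ℕ →₀ k} (hf : f ∈ I) {n : ℕ}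
    (hfs : ∀ i, n < i → f i = 0) (hfn : f n ≠ 0) : single n (f n) ∈ initialSet I :=
  ⟨f, hf, n, hfs, hfn, rfl⟩

lemma single_mem_Omega {S : Set (ℕ →₀ k)} {j : ℕ} {b : k} (h : single j b ∈ S) :
    b ∈ Omega S j :=
  ⟨single j b, h, fun _ hi => single_eq_of_ne hi.ne', single_eq_same⟩

end RotaBaxter

namespace Omega

variable {k : Type*} [CommRing k]

noncomputable def submodule (I : Submodule k (ℕ →₀ k)) (n : ℕ) : Submodule k k where
  carrier := Omega (I : Set (ℕ →₀ k)) n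
  add_mem' := by
    rintro _ _ ⟨f, hf, hfs, rfl⟩ ⟨g, hg, hgs, rfl⟩
    exact ⟨f + g, I.add_mem hf hg, fun i hi => by simp [hfs i hi, hgs i hi], rfl⟩
  zero_mem' := ⟨0, I.zero_mem, fun _ _ => rfl, rfl⟩
  smul_mem' := by
    rintro c _ ⟨f, hf, hfs, rfl⟩
    exact ⟨c • f, I.smul_mem c hf, fun i hi => by simp [hfs i hi], rfl⟩

lemma submodule_monotone {I : Submodule k (ℕ →₀ k)} (hP : ∀ f ∈ I, RBop f ∈ I) :
    Monotone (submodule I) := by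
  refine monotone_nat_of_le_succ fun n => ?_
  rintro _ ⟨f, hf, hfs, rfl⟩
  refine ⟨RBop f, hP f hf, fun i hi => ?_, RBop_apply_succ f n⟩
  obtain ⟨i, rfl⟩ := Nat.exists_eq_add_of_le' (n.zero_lt_succ.trans hi)
  rw [RBop_apply_succ]
  exact hfs i (by omega)

noncomputable def coeffwise (I : Submodule k (ℕ →₀ k)) : Submodule k (ℕ →₀ k) where
  carrier := {g | ∀ n, g n ∈ submodule I n}
  add_mem' ha hb n := add_mem (ha n) (hb n)
  zero_mem' n := zero_mem (submodule I n)
  smul_mem' c _ hg n := Submodule.smul_mem _ c (hg n)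

lemma single_mem_coeffwise {I : Submodule k (ℕ →₀ k)} {n : ℕ} {b : k}
    (hb : b ∈ submodule I n) : single n b ∈ coeffwise I := by
  intro m
  rw [single_apply]
  split_ifs with h
  · exact h ▸ hb
  · exact zero_mem _

lemma diamond_mem_coeffwise {I : Submodule k (ℕ →₀ k)} (hmono : Monotone (submodule I)) (l : k)
    (f : ℕ →₀ k) {g : ℕ →₀ k} (hg : g ∈ coeffwise I) :
    diamond l f g ∈ coeffwise I := by
  refine Submodule.finsuppSum_mem _ _ _ _ fun m _ => ?_
  refine Submodule.finsuppSum_mem _ _ _ _ fun n _ => ?_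
  refine Submodule.sum_mem _ fun i hi => single_mem_coeffwise ?_
  have hin : i ≤ min m n := Nat.lt_succ_iff.mp (Finset.mem_range.mp hi)
  have hcoeff : f m * g n * ((m + n - i).choose m : k) * (m.choose i : k) * l ^ i
      = (f m * ((m + n - i).choose m : k) * (m.choose i : k) * l ^ i) • g n := by
    rw [smul_eq_mul]; ring
  rw [hcoeff]
  exact hmono (by omega) (Submodule.smul_mem _ _ (hg n))

lemma RBop_mem_coeffwise {I : Submodule k (ℕ →₀ k)} (hmono : Monotone (submodule I))
    {g : ℕ →₀ k} (hg : g ∈ coeffwise I) : RBop g ∈ coeffwise I := by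
  rintro (_ | n)
  · rw [RBop_apply_zero]
    exact zero_mem _
  · rw [RBop_apply_succ]
    exact hmono n.le_succ (hg n)

lemma isRBIdeal_coeffwise {l : k} {I : Submodule k (ℕ →₀ k)} (hI : IsRBIdeal l I) :
    IsRBIdeal l (coeffwise I) :=
  have hmono := submodule_monotone hI.2
  ⟨fun f _ hg => diamond_mem_coeffwise hmono l f hg, fun _ => RBop_mem_coeffwise hmono⟩

lemma initialSet_subset_coeffwise (I : Submodule k (ℕ →₀ k)) :
    initialSet (I : Set (ℕ →₀ k)) ⊆ coeffwise I := by
  rintro _ ⟨f, hf, n, hfs, -, rfl⟩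
  exact single_mem_coeffwise ⟨f, hf, hfs, rfl⟩

end Omega

/-- A Rota-Baxter ideal `I` of `Ш_k(k)` and its initial Rota-Baxter ideal `in(I)`
(the Rota-Baxter ideal generated by the initial terms of nonzero elements of `I`)
have the same coefficient ideals: `Ω_j(I) = Ω_j(in(I))` for all `j`. -/
theorem omega_initial_eq {k : Type*} [CommRing k] (l : k) (I : Submodule k (ℕ →₀ k))
    (hI : IsRBIdeal l I) (j : ℕ) :
    Omega (I : Set (ℕ →₀ k)) j
      = Omega ((RBspan l (initialSet (I : Set (ℕ →₀ k)))) : Set (ℕ →₀ k)) j := by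
  ext b
  constructor
  · rintro ⟨f, hf, hfs, rfl⟩
    by_cases hfj : f j = 0
    · rw [hfj]
      exact zero_mem (Omega.submodule _ j)
    · exact single_mem_Omega (subset_RBspan l _ (single_mem_initialSet hf hfs hfj))
  · rintro ⟨g, hg, -, rfl⟩
    exact RBspan_le (Omega.isRBIdeal_coeffwise hI) (Omega.initialSet_subset_coeffwise I) hg j
end

section
/- Let k be a field of characteristic 0 and Ш_k(k) the free Rota-Baxter algebra of weight 0. If I is a nonzero Rota-Baxter ideal with starting point t, then I = ⊕_{i ≥ t} k a_i. -/
open Finsupp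

lemma diamond_one {k : Type*} [Field k] (g : ℕ →₀ k) :
    diamond (0:k) (aElt 1) g = g.sum fun n cn => single (n+1) (((n:k)+1)*cn) := by
  unfold diamond aElt
  rw [Finsupp.sum_single_index]
  · apply Finsupp.sum_congr
    intro n _
    cases n with
    | zero =>
        rw [show min 1 0 + 1 = 1 from rfl, Finset.sum_range_one]
        norm_num
    | succ m =>
        rw [show min 1 (m+1) + 1 = 2 from by omega, Finset.sum_range_succ, Finset.sum_range_one]
        simp only [pow_one, mul_zero, zero_mul, Finsupp.single_zero, add_zero, pow_zero,
          mul_one, Nat.sub_zero, Nat.choose_zero_right, Nat.choose_one_right, one_mul]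
        congr 1
        · omega
        · push_cast; ring
  · simp

noncomputable def Tnice (k : Type*) [Field k] (t : ℕ) : (ℕ →₀ k) →ₗ[k] (ℕ →₀ k) :=
  Finsupp.lsum k fun n => Finsupp.lsingle (n+1) ∘ₗ LinearMap.lsmul k k ((n:k) - t)

lemma Tnice_single {k : Type*} [Field k] (t n : ℕ) (c : k) :
    Tnice k t (single n c) = single (n+1) (((n:k)-t)*c) := by
  rw [Tnice, Finsupp.lsum_single]
  simp only [LinearMap.coe_comp, Function.comp_apply, LinearMap.lsmul_apply, smul_eq_mul,
    Finsupp.lsingle_apply]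

lemma Tnice_eq {k : Type*} [Field k] (t : ℕ) (g : ℕ →₀ k) :
    Tnice k t g = diamond 0 (aElt 1) g - ((t:k)+1) • RBop g := by
  rw [diamond_one, RBop, Finsupp.mapDomain, Finsupp.smul_sum]
  rw [Tnice]
  rw [Finsupp.lsum_apply]
  rw [Finsupp.sum, Finsupp.sum, Finsupp.sum, ← Finset.sum_sub_distrib]
  apply Finset.sum_congr rfl
  intro n _
  simp only [LinearMap.coe_comp, Function.comp_apply, LinearMap.lsmul_apply, smul_eq_mul,
    Finsupp.lsingle_apply, Finsupp.smul_single]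
  rw [← Finsupp.single_sub]
  congr 1
  ring

lemma Tnice_mem {k : Type*} [Field k] {I : Submodule k (ℕ →₀ k)}
    (hI : IsRBIdeal (0:k) I) (t : ℕ) {g : ℕ →₀ k} (hg : g ∈ I) : Tnice k t g ∈ I := by
  rw [Tnice_eq]
  exact sub_mem (hI.1 _ _ hg) (Submodule.smul_mem _ _ (hI.2 _ hg))

lemma Tnice_pow_mem {k : Type*} [Field k] {I : Submodule k (ℕ →₀ k)}
    (hI : IsRBIdeal (0:k) I) (t j : ℕ) {g : ℕ →₀ k} (hg : g ∈ I) :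
    ((Tnice k t)^j) g ∈ I := by
  induction j with
  | zero => simpa using hg
  | succ m ih =>
      rw [pow_succ', Module.End.mul_apply]
      exact Tnice_mem hI t ih

lemma Tnice_pow_single {k : Type*} [Field k] (t : ℕ) (j n : ℕ) (c : k) :
    ((Tnice k t)^j) (single n c)
      = single (n+j) (c * ∏ u ∈ Finset.range j, (((n+u:ℕ):k) - t)) := by
  induction j generalizing n c with
  | zero => simp
  | succ m ih =>
      rw [pow_succ, Module.End.mul_apply, Tnice_single, ih]
      rw [Finset.prod_range_succ']
      congr 1
      · omega
      · rw [Finset.prod_congr rfl (fun u _ => by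
          show ((n+1+u:ℕ):k) - t = ((n+(u+1):ℕ):k) - t
          congr 2
          omega)]
        push_cast
        ring

lemma Tnice_pow_apply {k : Type*} [Field k] (t j : ℕ) (f : ℕ →₀ k) :
    ((Tnice k t)^j) f
      = f.sum fun n c => single (n+j) (c * ∏ u ∈ Finset.range j, (((n+u:ℕ):k) - t)) := by
  conv_lhs => rw [← Finsupp.sum_single f]
  rw [map_finsuppSum]
  exact Finsupp.sum_congr fun n _ => Tnice_pow_single t j n (f n)

lemma RBop_single {k : Type*} [CommRing k] (n : ℕ) (c : k) :
    RBop (single n c) = single (n+1) c := by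
  rw [RBop, Finsupp.mapDomain_single]

lemma aElt_t_mem {k : Type*} [Field k] [CharZero k] {I : Submodule k (ℕ →₀ k)}
    (hI : IsRBIdeal (0:k) I) (t : ℕ) {f : ℕ →₀ k} (hf : f ∈ I) (hf0 : f ≠ 0)
    (hsupp : ∀ i, t < i → f i = 0) : aElt t ∈ I := by
  have hne : f.support.Nonempty := Finsupp.support_nonempty_iff.2 hf0
  set s := f.support.min' hne with hs
  have hsmem : s ∈ f.support := f.support.min'_mem hne
  have hst : s ≤ t := by
    by_contra h
    exact (Finsupp.mem_support_iff.1 hsmem) (hsupp s (by omega))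
  set lam : k := f s * ∏ u ∈ Finset.range (t - s), (((s+u:ℕ):k) - t) with hlam
  have hkey : ((Tnice k t)^(t-s)) f = single t lam := by
    rw [Tnice_pow_apply, Finsupp.sum]
    rw [Finset.sum_eq_single_of_mem s hsmem]
    · congr 1
      omega
    · intro n hn hns
      have hn1 : f n ≠ 0 := Finsupp.mem_support_iff.1 hn
      have hnt : n ≤ t := by
        by_contra h
        exact hn1 (hsupp n (by omega))
      have hsn : s < n := lt_of_le_of_ne (f.support.min'_le n hn) (Ne.symm hns)
      have : (∏ u ∈ Finset.range (t - s), (((n+u:ℕ):k) - t)) = 0 := by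
        apply Finset.prod_eq_zero (i := t - n)
        · simp only [Finset.mem_range]; omega
        · rw [show n + (t - n) = t by omega]
          ring
      rw [this, mul_zero, Finsupp.single_zero]
  have hlne : lam ≠ 0 := by
    apply mul_ne_zero (Finsupp.mem_support_iff.1 hsmem)
    apply Finset.prod_ne_zero_iff.2
    intro u hu
    have hu' : u < t - s := Finset.mem_range.1 hu
    have hne2 : s + u ≠ t := by omega
    exact sub_ne_zero_of_ne (by exact_mod_cast hne2)
  have hmem : Finsupp.single t lam ∈ I := hkey ▸ Tnice_pow_mem hI t (t-s) hf
  have : aElt t = lam⁻¹ • Finsupp.single t lam := by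
    rw [Finsupp.smul_single, smul_eq_mul, inv_mul_cancel₀ hlne, aElt]
  rw [this]
  exact Submodule.smul_mem _ _ hmem

lemma aElt_high_mem {k : Type*} [Field k] [CharZero k] {I : Submodule k (ℕ →₀ k)}
    (hI : IsRBIdeal (0:k) I) (t : ℕ) (hat : aElt t ∈ I) :
    ∀ n, t ≤ n → (aElt n : ℕ →₀ k) ∈ I := by
  intro n hn
  obtain ⟨m, rfl⟩ := Nat.exists_eq_add_of_le hn
  induction m with
  | zero => simpa using hat
  | succ p ih =>
      have := hI.2 _ (ih (by omega))
      rw [aElt, RBop_single] at this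
      simpa [aElt, add_assoc] using this

/-- Let `k` be a field of characteristic `0` and `Ш_k(k)` of weight `0`. If `I` is a nonzero
Rota-Baxter ideal with starting point `t`, then `I = ⊕_{i ≥ t} k a_i`. -/
theorem ideal_eq_high_degrees {k : Type*} [Field k] [CharZero k]
    (I : Submodule k (ℕ →₀ k)) (hI : IsRBIdeal (0 : k) I)
    (t : ℕ)
    (hlow : ∀ j : ℕ, j < t → Omega (I : Set (ℕ →₀ k)) j = {0})
    (hne : Omega (I : Set (ℕ →₀ k)) t ≠ {0}) :
    ∀ f : ℕ →₀ k, f ∈ I ↔ ∀ i : ℕ, i < t → f i = 0 := by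
  -- step 1: get a nonzero element of Omega t and deduce aElt t ∈ I
  have h0 : (0:k) ∈ Omega (I : Set (ℕ →₀ k)) t :=
    ⟨0, I.zero_mem, fun i _ => rfl, rfl⟩
  have hb : ∃ b ∈ Omega (I : Set (ℕ →₀ k)) t, b ≠ 0 := by
    by_contra hcon
    push_neg at hcon
    apply hne
    ext x
    simp only [Set.mem_singleton_iff]
    exact ⟨fun hx => hcon x hx, fun hx => hx ▸ h0⟩
  obtain ⟨b, ⟨f0, hf0I, hf0supp, hf0t⟩, hbne⟩ := hb
  have hf0ne : f0 ≠ 0 := fun h => hbne (by rw [← hf0t, h]; rfl)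
  have hat : aElt t ∈ I := aElt_t_mem hI t hf0I hf0ne hf0supp
  have high := aElt_high_mem hI t hat
  -- step 2: anything supported in degrees ≥ t is in I
  have hback : ∀ g : ℕ →₀ k, (∀ i, i < t → g i = 0) → g ∈ I := by
    intro g hg
    rw [← Finsupp.sum_single g, Finsupp.sum]
    apply Submodule.sum_mem
    intro n hn
    have hgn : g n ≠ 0 := Finsupp.mem_support_iff.1 hn
    have htn : t ≤ n := by
      by_contra h
      exact hgn (hg n (by omega))
    have : Finsupp.single n (g n) = g n • aElt n := by
      rw [aElt, Finsupp.smul_single, smul_eq_mul, mul_one]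
    rw [this]
    exact Submodule.smul_mem _ _ (high n htn)
  intro f
  constructor
  · intro hf i hit
    set h : ℕ →₀ k := Finsupp.filter (t ≤ ·) f with hh
    have hhI : h ∈ I := hback h (fun i hi => Finsupp.filter_apply_neg _ _ (by omega))
    have hgI : f - h ∈ I := sub_mem hf hhI
    have hgz : f - h = 0 := by
      by_contra hgz
      have hsne : (f - h).support.Nonempty := Finsupp.support_nonempty_iff.2 hgz
      set n := (f - h).support.max' hsne with hn
      have hnmem : n ∈ (f - h).support := (f - h).support.max'_mem hsne
      have hnne : (f - h) n ≠ 0 := Finsupp.mem_support_iff.1 hnmem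
      have hnt : n < t := by
        by_contra hc
        apply hnne
        rw [Finsupp.sub_apply, hh, Finsupp.filter_apply_pos _ _ (by omega : t ≤ n), sub_self]
      have hmemO : (f - h) n ∈ Omega (I : Set (ℕ →₀ k)) n := by
        refine ⟨f - h, hgI, fun i hi => ?_, rfl⟩
        by_contra hiz
        have := (f - h).support.le_max' i (Finsupp.mem_support_iff.2 hiz)
        omega
      rw [hlow n hnt] at hmemO
      exact hnne hmemO
    have : f = h := by rwa [sub_eq_zero] at hgz
    rw [this, hh, Finsupp.filter_apply_neg _ _ (by omega : ¬ t ≤ i)]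
  · exact hback f
end

section
/- In Ш_ℤ(ℤ) of weight 0, for a prime p, the set pℤ a_0 ⊕ (⊕_{i ≥ 1} ℤ a_i) is a Rota-Baxter ideal whose quotient ring is isomorphic to ℤ/pℤ; in particular it is a prime ideal. -/
open Finsupp

lemma diamond_zero_apply {k : Type*} [CommRing k] (f g : ℕ →₀ k) :
    (diamond (0 : k) f g) 0 = f 0 * g 0 := by
  classical
  rw [diamond, Finsupp.sum_apply]
  have h : ∀ m, ∀ cm : k, ((g.sum fun n cn =>
      ∑ i ∈ Finset.range (min m n + 1),
        Finsupp.single (m + n - i) (cm * cn * ((m + n - i).choose m : k) * ((m.choose i : k)) * (0:k) ^ i)) 0)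
      = if m = 0 then cm * g 0 else 0 := by
    intro m cm
    rw [Finsupp.sum_apply]
    have h2 : ∀ n, ∀ cn : k, ((∑ i ∈ Finset.range (min m n + 1),
        Finsupp.single (m + n - i) (cm * cn * ((m + n - i).choose m : k) * ((m.choose i : k)) * (0:k) ^ i)) 0 : k)
        = if m = 0 ∧ n = 0 then cm * cn else 0 := by
      intro n cn
      rw [Finset.sum_apply']
      have key : ∀ i ∈ Finset.range (min m n + 1),
          ((Finsupp.single (m + n - i) (cm * cn * ((m + n - i).choose m : k) * ((m.choose i : k)) * (0:k) ^ i)) 0 : k)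
          = if i = 0 ∧ (m = 0 ∧ n = 0) then cm * cn else 0 := by
        intro i hi
        rcases Nat.eq_zero_or_pos i with rfl | hipos
        · rcases Nat.eq_zero_or_pos (m+n) with hmn | hmn
          · have hm : m = 0 := by omega
            have hn : n = 0 := by omega
            simp [hm, hn]
          · have hm : ¬ (m = 0 ∧ n = 0) := by omega
            have hne : m + n - 0 ≠ 0 := by omega
            simp [Finsupp.single_apply, hne, hm]
        · have hz : (0:k) ^ i = 0 := zero_pow (by omega)
          have : i ≠ 0 := by omega
          simp [hz, this]
      rw [Finset.sum_congr rfl key]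
      by_cases hQ : m = 0 ∧ n = 0
      · obtain ⟨hm0, hn0⟩ := hQ
        subst hm0; subst hn0
        simp
      · simp [hQ]
    rw [Finsupp.sum_congr (g2 := fun n cn => if m = 0 ∧ n = 0 then cm * cn else 0)
        (fun n _ => h2 n (g n))]
    by_cases hm : m = 0
    · simp only [hm, true_and]
      rw [Finsupp.sum_ite_eq' g 0 (fun _ cn => cm * cn)]
      by_cases h0 : (0:ℕ) ∈ g.support
      · simp [h0]
      · simp [h0, Finsupp.notMem_support_iff.mp h0]
    · simp [hm, Finsupp.sum]
  rw [Finsupp.sum_congr (g2 := fun m cm => if m = 0 then cm * g 0 else 0)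
      (fun m _ => h m (f m))]
  rw [Finsupp.sum_ite_eq' f 0 (fun _ cm => cm * g 0)]
  by_cases h0 : (0:ℕ) ∈ f.support
  · simp [h0]
  · simp [h0, Finsupp.notMem_support_iff.mp h0]

lemma RBop_zero_apply {k : Type*} [CommRing k] (f : ℕ →₀ k) : (RBop f) 0 = 0 := by
  classical
  rw [RBop]
  apply Finsupp.mapDomain_notin_range
  rintro ⟨n, hn⟩
  simp only at hn
  omega

/-- In `Ш_ℤ(ℤ)` of weight `0`, for a prime `p`, the set `pℤ a_0 ⊕ (⊕_{i ≥ 1} ℤ a_i)`,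
i.e. `{f | p ∣ f 0}`, is a Rota-Baxter ideal whose quotient is isomorphic to `ℤ/pℤ`
(the mod-`p` constant-coefficient map is surjective, multiplicative, unital, with this
ideal as kernel); in particular it is a prime ideal. -/
theorem mod_p_ideal_prime (p : ℕ) (hp : p.Prime) :
    ∃ J : Submodule ℤ (ℕ →₀ ℤ),
      (∀ f : ℕ →₀ ℤ, f ∈ J ↔ (p : ℤ) ∣ f 0)
      ∧ IsRBIdeal (0 : ℤ) J
      ∧ J ≠ ⊤
      ∧ (∀ f g : ℕ →₀ ℤ, diamond (0 : ℤ) f g ∈ J → f ∈ J ∨ g ∈ J)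
      ∧ (∀ f g : ℕ →₀ ℤ,
          ((diamond (0 : ℤ) f g) 0 : ZMod p) = ((f 0 : ZMod p)) * ((g 0 : ZMod p)))
      ∧ (((aElt 0 : ℕ →₀ ℤ) 0 : ZMod p) = 1)
      ∧ Function.Surjective (fun f : ℕ →₀ ℤ => ((f 0 : ℤ) : ZMod p)) := by
  haveI := Fact.mk hp
  have hpZ : Prime ((p : ℤ)) := Nat.prime_iff_prime_int.mp hp
  set J : Submodule ℤ (ℕ →₀ ℤ) :=
    Submodule.comap (Finsupp.lapply 0 : (ℕ →₀ ℤ) →ₗ[ℤ] ℤ) (Ideal.span {(p : ℤ)}) with hJ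
  have hmem : ∀ f : ℕ →₀ ℤ, f ∈ J ↔ (p : ℤ) ∣ f 0 := by
    intro f
    simp [hJ, Ideal.mem_span_singleton, Finsupp.lapply]
  refine ⟨J, hmem, ⟨?_, ?_⟩, ?_, ?_, ?_, ?_, ?_⟩
  · intro f g hg
    rw [hmem] at hg ⊢
    rw [diamond_zero_apply]
    exact Dvd.dvd.mul_left hg (f 0)
  · intro f _
    rw [hmem, RBop_zero_apply]
    exact dvd_zero _
  · intro htop
    have := (hmem (aElt 0)).mp (htop ▸ Submodule.mem_top)
    rw [aElt, Finsupp.single_apply] at this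
    simp at this
    rcases Int.isUnit_iff.mp (isUnit_of_dvd_one this) with h | h
    · exact hp.one_lt.ne' (by exact_mod_cast h)
    · have : (0:ℤ) ≤ (p:ℤ) := Int.natCast_nonneg p
      omega
  · intro f g hfg
    rw [hmem] at hfg ⊢
    rw [hmem]
    rw [diamond_zero_apply] at hfg
    exact (hpZ.dvd_mul.mp hfg).imp id id
  · intro f g
    rw [diamond_zero_apply]
    push_cast
    ring
  · rw [aElt]
    simp
  · intro z
    refine ⟨Finsupp.single 0 (z.val : ℤ), ?_⟩
    simp [ZMod.natCast_val, ZMod.cast_id]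
end
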